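/- For type-C Dunkl operators, the shift formula (∏_{k=1}^r D_k)(D_j x_j - (a/2)∑_{i<j}(σ_{ij} + s_{ij})) = (D_j x_j - (a/2)∑_{i<j}(σ_{ij} + s_{ij}) + 1 - (ι-1)σ_j)(∏_{k=1}^r D_k) holds as operators on polynomials. -/

import Mathlib

open MvPolynomial Finset

noncomputable section

abbrev Pol (r : ℕ) : Type := MvPolynomial (Fin r) ℂ

/-- Multiplication operator by a polynomial. -/
def mulOp {r : ℕ} (p : Pol r) : Module.End ℂ (Pol r) := LinearMap.mulLeft ℂ p

/-- Partial derivative operator. -/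
def pd {r : ℕ} (j : Fin r) : Module.End ℂ (Pol r) := (pderiv j).toLinearMap

/-- The transposition operator `s_{ij}` swapping the variables `i` and `j`. -/
def swOp {r : ℕ} (i j : Fin r) : Module.End ℂ (Pol r) :=
  (rename ⇑(Equiv.swap i j) : Pol r →ₐ[ℂ] Pol r).toLinearMap

/-- The sign change operator `σ_j : x_j ↦ -x_j`. -/
def negOp {r : ℕ} (j : Fin r) : Module.End ℂ (Pol r) :=
  (aeval (fun k : Fin r => if k = j then -(X j) else X k) : Pol r →ₐ[ℂ] Pol r).toLinearMap

/-- The signed transposition operator `σ_{ij} : x_i ↦ -x_j, x_j ↦ -x_i`. -/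
def sswOp {r : ℕ} (i j : Fin r) : Module.End ℂ (Pol r) :=
  (aeval (fun k : Fin r => if k = i then -(X j) else if k = j then -(X i) else X k)
    : Pol r →ₐ[ℂ] Pol r).toLinearMap

/-- Ordered product `f 0 * f 1 * ⋯ * f (r-1)` of operators. -/
def opProd {r : ℕ} (f : Fin r → Module.End ℂ (Pol r)) : Module.End ℂ (Pol r) :=
  ((List.finRange r).map f).prod

/-- The type-C Dunkl operator
`D_j = ∂_j + ((ι-1)/2) x_j⁻¹(1-σ_j) + (a/2) ∑_{i≠j} [(x_j-x_i)⁻¹(1-s_{ij}) + (x_j+x_i)⁻¹(1-σ_{ij})]`,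
with the difference-quotient operators given as data `q0, qs, qσ` pinned down by the
specifications below. -/
def dunklC {r : ℕ} (ι a : ℂ) (q0 : Fin r → Module.End ℂ (Pol r))
    (qs qσ : Fin r → Fin r → Module.End ℂ (Pol r)) (j : Fin r) : Module.End ℂ (Pol r) :=
  pd j + ((ι - 1) / 2) • q0 j + (a / 2) • ∑ i ∈ Finset.univ.erase j, (qs i j + qσ i j)

/-- Specification: `q0 j` is division of `(1 - σ_j) f` by `x_j`. -/
def QuotLong {r : ℕ} (q0 : Fin r → Module.End ℂ (Pol r)) : Prop :=
  ∀ j : Fin r, ∀ f : Pol r, X j * q0 j f = f - negOp j f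

/-- Specification: `qs i j` is division of `(1 - s_{ij}) f` by `x_j - x_i`. -/
def QuotS {r : ℕ} (qs : Fin r → Fin r → Module.End ℂ (Pol r)) : Prop :=
  ∀ i j : Fin r, i ≠ j → ∀ f : Pol r, (X j - X i) * qs i j f = f - swOp i j f

/-- Specification: `qσ i j` is division of `(1 - σ_{ij}) f` by `x_j + x_i`. -/
def QuotSig {r : ℕ} (qσ : Fin r → Fin r → Module.End ℂ (Pol r)) : Prop :=
  ∀ i j : Fin r, i ≠ j → ∀ f : Pol r, (X j + X i) * qσ i j f = f - sswOp i j f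

/-!
The Dunkl operators commute. For `j ≠ k` the explicit commutators `⁅D_k, x_i⁆` and the way the
reflections conjugate the `D`'s make `⁅D_j, ⁅D_k, x_i⁆⁆` symmetric in `j, k`, so by the Jacobi
identity `⁅D_j, D_k⁆` commutes with every `x_i`; since it kills `1`, it vanishes.

Write `∏ D = D_j ∏_{k ≠ j} D_k` and move `x_j` through the product one factor at a time: the
reflection terms produced by `⁅D_k, x_j⁆` cancel, one by one, those of `⁅D_j, x_j⁆`, leaving
`(∏ D) x_j = x_j ∏ D + ∏_{k ≠ j} D_k + (ι-1) σ_j ∏_{k ≠ j} D_k`. Multiplying on the left by `D_j`,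
with `D_j σ_j = -σ_j D_j` and the fact that `∏ D` commutes with every `s_{ij}` and `σ_{ij}`, gives
the shift formula.

The relations between the difference quotients, the reflections and the `x_i` all follow by
cancelling the nonzero denominators `x_j`, `x_j ± x_i` in the domain `ℂ[x]`.
-/

section DiffQuot

variable {A F : Type*} [CommRing A] [FunLike F A A]

def IsDiffQuot (p : A) (τ : F) (Q : A → A) : Prop := ∀ f, p * Q f = f - τ f

namespace IsDiffQuot

variable [IsDomain A] [RingHomClass F A A] {p p' c x : A} {τ τ' : F} {Q Q' : A → A}

theorem apply_one (hQ : IsDiffQuot p τ Q) (hp : p ≠ 0) : Q 1 = 0 := by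
  have h := hQ 1
  rwa [map_one, sub_self, mul_eq_zero, or_iff_right hp] at h

theorem apply_mul (hQ : IsDiffQuot p τ Q) (hp : p ≠ 0) (hx : τ x = x - c * p) (f : A) :
    Q (x * f) = x * Q f + c * τ f := by
  refine mul_left_cancel₀ hp ?_
  rw [hQ, map_mul, hx, mul_add, mul_left_comm, hQ]
  ring

theorem map_apply (hQ : IsDiffQuot p τ Q) (hQ' : IsDiffQuot p' τ' Q') (hp' : p' ≠ 0) {φ : F}
    (hφ : ∀ f, φ (τ f) = τ' (φ f)) (hφp : φ p = c * p') (f : A) :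
    Q' (φ f) = c * φ (Q f) := by
  refine mul_left_cancel₀ hp' ?_
  rw [hQ', ← hφ, ← map_sub, ← hQ, map_mul, hφp]
  ring

end IsDiffQuot

end DiffQuot

theorem SemiconjBy.list_prod_map {M ι : Type*} [Monoid M] {a : M} {f g : ι → M}
    (h : ∀ i, SemiconjBy a (f i) (g i)) (ℓ : List ι) :
    SemiconjBy a (ℓ.map f).prod (ℓ.map g).prod := by
  induction ℓ with
  | nil => exact SemiconjBy.one_right a
  | cons i ℓ ih => simpa using (h i).mul_right ih

theorem mul_eq_mul_add_lie {R : Type*} [Ring R] (x y : R) : x * y = y * x + ⁅x, y⁆ := by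
  rw [Ring.lie_def]
  abel

namespace MvPolynomial

variable {σ R : Type*} [CommSemiring R]

theorem algHom_apply_apply_eq {F G H K : MvPolynomial σ R →ₐ[R] MvPolynomial σ R}
    (h : ∀ k, F (G (X k)) = H (K (X k))) (f : MvPolynomial σ R) : F (G f) = H (K f) :=
  DFunLike.congr_fun (algHom_ext (f := F.comp G) (g := H.comp K) h) f

theorem linearMap_apply_eq_mul_apply_one (T : MvPolynomial σ R →ₗ[R] MvPolynomial σ R)
    (hT : ∀ i f, T (X i * f) = X i * T f) (f : MvPolynomial σ R) : T f = f * T 1 := by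
  induction f using MvPolynomial.induction_on with
  | C c => rw [← smul_eq_C_mul, ← T.map_smul, smul_eq_C_mul, mul_one]
  | add f g hf hg => rw [map_add, hf, hg, add_mul]
  | mul_X f i ih => rw [mul_comm, hT, ih, mul_assoc]

end MvPolynomial

variable {r : ℕ}

def negAlgHom (j : Fin r) : Pol r →ₐ[ℂ] Pol r :=
  aeval fun k => if k = j then -(X j) else X k

def swAlgHom (i j : Fin r) : Pol r →ₐ[ℂ] Pol r := rename (Equiv.swap i j)

def sswAlgHom (i j : Fin r) : Pol r →ₐ[ℂ] Pol r :=
  aeval fun k => if k = i then -(X j) else if k = j then -(X i) else X k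

theorem negOp_apply (j : Fin r) (f : Pol r) : negOp j f = negAlgHom j f := rfl

theorem swOp_apply (i j : Fin r) (f : Pol r) : swOp i j f = swAlgHom i j f := rfl

theorem sswOp_apply (i j : Fin r) (f : Pol r) : sswOp i j f = sswAlgHom i j f := rfl

theorem mulOp_apply (p f : Pol r) : mulOp p f = p * f := rfl

@[simp] theorem negAlgHom_X (j k : Fin r) :
    negAlgHom j (X k) = if k = j then -(X j) else X k := by
  simp [negAlgHom]

@[simp] theorem swAlgHom_X (i j k : Fin r) : swAlgHom i j (X k) = X (Equiv.swap i j k) := by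
  simp [swAlgHom]

@[simp] theorem sswAlgHom_X (i j k : Fin r) :
    sswAlgHom i j (X k) = if k = i then -(X j) else if k = j then -(X i) else X k := by
  simp [sswAlgHom]

theorem swAlgHom_comm (i j : Fin r) : swAlgHom i j = swAlgHom j i := by
  rw [swAlgHom, swAlgHom, Equiv.swap_comm]

theorem sswAlgHom_comm (i j : Fin r) : sswAlgHom i j = sswAlgHom j i := by
  refine algHom_ext fun k => ?_
  by_cases hi : k = i <;> by_cases hj : k = j <;> simp_all

theorem swOp_comm (i j : Fin r) : swOp i j = swOp j i := by
  rw [swOp, swOp, Equiv.swap_comm]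

theorem sswOp_comm (i j : Fin r) : sswOp i j = sswOp j i :=
  LinearMap.ext fun f => by rw [sswOp_apply, sswOp_apply, sswAlgHom_comm]

theorem negAlgHom_negAlgHom_comm (i j : Fin r) (f : Pol r) :
    negAlgHom i (negAlgHom j f) = negAlgHom j (negAlgHom i f) := by
  refine algHom_apply_apply_eq (fun k => ?_) f
  by_cases hi : k = i <;> by_cases hj : k = j <;> simp_all

theorem negAlgHom_sswAlgHom_of_ne {i k j : Fin r} (hji : j ≠ i) (hjk : j ≠ k) (f : Pol r) :
    negAlgHom j (sswAlgHom i k f) = sswAlgHom i k (negAlgHom j f) := by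
  refine algHom_apply_apply_eq (fun m => ?_) f
  by_cases hi : m = i <;> by_cases hk : m = k <;> by_cases hj : m = j <;>
    simp_all [Ne.symm hji, Ne.symm hjk]

theorem negAlgHom_sswAlgHom_right {i j : Fin r} (hij : i ≠ j) (f : Pol r) :
    negAlgHom j (sswAlgHom i j f) = swAlgHom i j (negAlgHom j f) := by
  refine algHom_apply_apply_eq (fun m => ?_) f
  by_cases hi : m = i <;> by_cases hj : m = j <;> simp_all [Equiv.swap_apply_def]

theorem negAlgHom_swAlgHom_right {i j : Fin r} (hij : i ≠ j) (f : Pol r) :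
    negAlgHom j (swAlgHom i j f) = sswAlgHom i j (negAlgHom j f) := by
  refine algHom_apply_apply_eq (fun m => ?_) f
  by_cases hi : m = i <;> by_cases hj : m = j <;> simp_all [Equiv.swap_apply_def]

theorem swAlgHom_negAlgHom (u v m : Fin r) (f : Pol r) :
    swAlgHom u v (negAlgHom m f) = negAlgHom (Equiv.swap u v m) (swAlgHom u v f) := by
  refine algHom_apply_apply_eq (fun k => ?_) f
  by_cases hk : k = m <;> simp [hk]

theorem swAlgHom_swAlgHom (u v i m : Fin r) (f : Pol r) :
    swAlgHom u v (swAlgHom i m f) =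
      swAlgHom (Equiv.swap u v i) (Equiv.swap u v m) (swAlgHom u v f) := by
  refine algHom_apply_apply_eq (fun k => ?_) f
  simp [Equiv.swap_apply_apply]

theorem swAlgHom_sswAlgHom (u v i m : Fin r) (f : Pol r) :
    swAlgHom u v (sswAlgHom i m f) =
      sswAlgHom (Equiv.swap u v i) (Equiv.swap u v m) (swAlgHom u v f) := by
  refine algHom_apply_apply_eq (fun k => ?_) f
  by_cases hi : k = i <;> by_cases hm : k = m <;> simp_all

theorem sswAlgHom_apply_eq {u v : Fin r} (huv : u ≠ v) (f : Pol r) :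
    sswAlgHom u v f = swAlgHom u v (negAlgHom u (negAlgHom v f)) := by
  have h : sswAlgHom u v = (swAlgHom u v).comp ((negAlgHom u).comp (negAlgHom v)) := by
    refine algHom_ext fun k => ?_
    by_cases hu : k = u <;> by_cases hv : k = v <;> simp_all [Equiv.swap_apply_def]
  exact DFunLike.congr_fun h f

theorem sswOp_eq {u v : Fin r} (huv : u ≠ v) : sswOp u v = swOp u v * negOp u * negOp v :=
  LinearMap.ext fun f => sswAlgHom_apply_eq huv f

theorem pderiv_negAlgHom (j k : Fin r) (f : Pol r) :
    pderiv k (negAlgHom j f) = (if k = j then -1 else 1 : ℂ) • negAlgHom j (pderiv k f) := by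
  induction f using MvPolynomial.induction_on with
  | C c => simp
  | add f g hf hg => simp only [map_add, hf, hg, smul_add]
  | mul_X f n ih =>
    rw [map_mul, pderiv_mul, ih, pderiv_mul, map_add, map_mul, map_mul, smul_add, smul_mul_assoc]
    by_cases hn : n = k <;> by_cases hj : n = j <;> subst_vars <;> simp [pderiv_X, *]

theorem X_sub_X_ne_zero {i j : Fin r} (h : i ≠ j) : (X j - X i : Pol r) ≠ 0 :=
  sub_ne_zero.mpr fun hc => h (X_injective hc).symm

theorem X_add_X_ne_zero {i j : Fin r} (h : i ≠ j) : (X j + X i : Pol r) ≠ 0 := fun hc => by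
  simpa [pderiv_X, Pi.single_apply, h] using congrArg (pderiv j) hc

section Dunkl

variable {ι a : ℂ} {q0 : Fin r → Module.End ℂ (Pol r)}
  {qs qσ : Fin r → Fin r → Module.End ℂ (Pol r)}

local notation "D" => dunklC ι a q0 qs qσ

theorem QuotLong.isDiffQuot (hq0 : QuotLong q0) (j : Fin r) :
    IsDiffQuot (X j) (negAlgHom j) (q0 j) :=
  hq0 j

theorem QuotS.isDiffQuot (hqs : QuotS qs) {i j : Fin r} (h : i ≠ j) :
    IsDiffQuot (X j - X i) (swAlgHom i j) (qs i j) :=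
  hqs i j h

theorem QuotSig.isDiffQuot (hqσ : QuotSig qσ) {i j : Fin r} (h : i ≠ j) :
    IsDiffQuot (X j + X i) (sswAlgHom i j) (qσ i j) :=
  hqσ i j h

theorem dunklC_apply (m : Fin r) (f : Pol r) :
    D m f = pderiv m f + ((ι - 1) / 2) • q0 m f
      + (a / 2) • ∑ i ∈ univ.erase m, (qs i m f + qσ i m f) := by
  simp [dunklC, pd, LinearMap.sum_apply]

variable (hq0 : QuotLong q0) (hqs : QuotS qs) (hqσ : QuotSig qσ)
include hqs hqσ

theorem qs_add_qσ_negAlgHom_of_ne {i m j : Fin r} (him : i ≠ m) (hmj : m ≠ j) (f : Pol r) :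
    qs i m (negAlgHom j f) + qσ i m (negAlgHom j f) = negAlgHom j (qs i m f + qσ i m f) := by
  have hs := hqs.isDiffQuot him
  have hσ := hqσ.isDiffQuot him
  rcases eq_or_ne i j with rfl | hij
  · -- `σ_i` interchanges the two difference quotients
    have h₁ := hσ.map_apply hs (X_sub_X_ne_zero him) (c := 1)
      (fun f => by rw [sswAlgHom_comm, swAlgHom_comm, negAlgHom_sswAlgHom_right him.symm])
      (by simp [hmj, sub_eq_add_neg]) f
    have h₂ := hs.map_apply hσ (X_add_X_ne_zero him) (c := 1)
      (fun f => by rw [sswAlgHom_comm, swAlgHom_comm, negAlgHom_swAlgHom_right him.symm])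
      (by simp [hmj, sub_eq_add_neg]) f
    rw [h₁, h₂, map_add, one_mul, one_mul, add_comm]
  · have h₁ := hs.map_apply hs (X_sub_X_ne_zero him) (c := 1)
      (fun f => by rw [swAlgHom_negAlgHom, Equiv.swap_apply_of_ne_of_ne hij.symm hmj.symm])
      (by simp [hij, hmj]) f
    have h₂ := hσ.map_apply hσ (X_add_X_ne_zero him) (c := 1)
      (fun f => negAlgHom_sswAlgHom_of_ne hij.symm hmj.symm f) (by simp [hij, hmj]) f
    rw [h₁, h₂, map_add, one_mul, one_mul]

theorem qs_add_qσ_negAlgHom_self {i m : Fin r} (him : i ≠ m) (f : Pol r) :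
    qs i m (negAlgHom m f) + qσ i m (negAlgHom m f) = -negAlgHom m (qs i m f + qσ i m f) := by
  have hs := hqs.isDiffQuot him
  have hσ := hqσ.isDiffQuot him
  have h₁ := hσ.map_apply hs (X_sub_X_ne_zero him) (c := -1)
    (negAlgHom_sswAlgHom_right him) (by simp [him]; ring) f
  have h₂ := hs.map_apply hσ (X_add_X_ne_zero him) (c := -1)
    (negAlgHom_swAlgHom_right him) (by simp [him]; ring) f
  rw [h₁, h₂, map_add]
  ring

theorem qs_add_qσ_swAlgHom (u v : Fin r) {i m : Fin r} (him : i ≠ m) (f : Pol r) :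
    qs (Equiv.swap u v i) (Equiv.swap u v m) (swAlgHom u v f)
        + qσ (Equiv.swap u v i) (Equiv.swap u v m) (swAlgHom u v f)
      = swAlgHom u v (qs i m f + qσ i m f) := by
  have him' := (Equiv.swap u v).injective.ne him
  have h₁ := (hqs.isDiffQuot him).map_apply (hqs.isDiffQuot him') (X_sub_X_ne_zero him')
    (c := 1) (swAlgHom_swAlgHom u v i m) (by simp) f
  have h₂ := (hqσ.isDiffQuot him).map_apply (hqσ.isDiffQuot him') (X_add_X_ne_zero him')
    (c := 1) (swAlgHom_sswAlgHom u v i m) (by simp) f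
  rw [h₁, h₂, map_add, one_mul, one_mul]

theorem qs_add_qσ_X_mul_of_ne {i k j : Fin r} (hik : i ≠ k) (hkj : k ≠ j) (f : Pol r) :
    qs i k (X j * f) + qσ i k (X j * f) = X j * (qs i k f + qσ i k f)
      + if i = j then sswAlgHom j k f - swAlgHom j k f else 0 := by
  have hs := hqs.isDiffQuot hik
  have hσ := hqσ.isDiffQuot hik
  rcases eq_or_ne i j with rfl | hij
  · rw [hs.apply_mul (X_sub_X_ne_zero hik) (c := -1) (by simp),
      hσ.apply_mul (X_add_X_ne_zero hik) (c := 1) (by simp), if_pos rfl]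
    ring
  · rw [hs.apply_mul (X_sub_X_ne_zero hik) (c := 0)
        (by simp [Equiv.swap_apply_of_ne_of_ne hij.symm hkj.symm]),
      hσ.apply_mul (X_add_X_ne_zero hik) (c := 0) (by simp [hij.symm, hkj.symm]), if_neg hij]
    ring

theorem qs_add_qσ_X_mul_self {i j : Fin r} (hij : i ≠ j) (f : Pol r) :
    qs i j (X j * f) + qσ i j (X j * f)
      = X j * (qs i j f + qσ i j f) + (sswAlgHom i j f + swAlgHom i j f) := by
  rw [(hqs.isDiffQuot hij).apply_mul (X_sub_X_ne_zero hij) (c := 1) (by simp),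
    (hqσ.isDiffQuot hij).apply_mul (X_add_X_ne_zero hij) (c := 1) (by simp [hij.symm])]
  ring

include hq0

theorem dunklC_negAlgHom_of_ne {m j : Fin r} (hmj : m ≠ j) (f : Pol r) :
    D m (negAlgHom j f) = negAlgHom j (D m f) := by
  have hq := (hq0.isDiffQuot m).map_apply (hq0.isDiffQuot m) (X_ne_zero m) (c := 1)
    (negAlgHom_negAlgHom_comm j m) (by simp [hmj]) f
  rw [dunklC_apply, dunklC_apply, pderiv_negAlgHom, if_neg hmj, one_smul, hq, one_mul,
    sum_congr rfl fun i hi => qs_add_qσ_negAlgHom_of_ne hqs hqσ (ne_of_mem_erase hi) hmj f]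
  simp only [map_add, map_smul, map_sum]

theorem dunklC_negAlgHom_self (j : Fin r) (f : Pol r) :
    D j (negAlgHom j f) = -negAlgHom j (D j f) := by
  have hq := (hq0.isDiffQuot j).map_apply (hq0.isDiffQuot j) (X_ne_zero j) (c := -1)
    (fun _ => rfl) (by simp) f
  rw [dunklC_apply, dunklC_apply, pderiv_negAlgHom, if_pos rfl, hq, neg_one_mul,
    sum_congr rfl fun i hi => qs_add_qσ_negAlgHom_self hqs hqσ (ne_of_mem_erase hi) f]
  simp only [map_add, map_smul, map_sum, sum_neg_distrib]
  module

theorem dunklC_swAlgHom (u v m : Fin r) (f : Pol r) :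
    D (Equiv.swap u v m) (swAlgHom u v f) = swAlgHom u v (D m f) := by
  have hq := (hq0.isDiffQuot m).map_apply (hq0.isDiffQuot (Equiv.swap u v m)) (X_ne_zero _)
    (c := 1) (swAlgHom_negAlgHom u v m) (by simp) f
  have hpd : pderiv (Equiv.swap u v m) (swAlgHom u v f) = swAlgHom u v (pderiv m f) :=
    pderiv_rename (Equiv.swap u v).injective m f
  have herase :
      univ.erase (Equiv.swap u v m) = (univ.erase m).map (Equiv.swap u v).toEmbedding := by
    ext
    simp
  rw [dunklC_apply, dunklC_apply, hpd, hq, one_mul, herase, sum_map]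
  simp only [Equiv.coe_toEmbedding, map_add, map_smul, map_sum]
  rw [sum_congr rfl fun i hi => qs_add_qσ_swAlgHom hqs hqσ u v (ne_of_mem_erase hi) f]
  simp only [map_add]

theorem commute_negOp_dunklC {m j : Fin r} (hmj : m ≠ j) : Commute (negOp j) (D m) :=
  LinearMap.ext fun f => (dunklC_negAlgHom_of_ne hq0 hqs hqσ hmj f).symm

theorem negOp_mul_dunklC_self (j : Fin r) : negOp j * D j = -(D j * negOp j) :=
  LinearMap.ext fun f => by simp [negOp_apply, dunklC_negAlgHom_self hq0 hqs hqσ j f]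

theorem swOp_mul_dunklC (u v m : Fin r) : swOp u v * D m = D (Equiv.swap u v m) * swOp u v :=
  LinearMap.ext fun f => (dunklC_swAlgHom hq0 hqs hqσ u v m f).symm

theorem swOp_mul_dunklC_left (u v : Fin r) : swOp u v * D u = D v * swOp u v := by
  simpa using swOp_mul_dunklC hq0 hqs hqσ u v u

theorem swOp_mul_dunklC_right (u v : Fin r) : swOp u v * D v = D u * swOp u v := by
  simpa using swOp_mul_dunklC hq0 hqs hqσ u v v

theorem commute_swOp_dunklC {u v m : Fin r} (hmu : m ≠ u) (hmv : m ≠ v) :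
    Commute (swOp u v) (D m) :=
  (by simpa [Equiv.swap_apply_of_ne_of_ne hmu hmv] using swOp_mul_dunklC hq0 hqs hqσ u v m :
    swOp u v * D m = D m * swOp u v)

theorem commute_sswOp_dunklC {u v m : Fin r} (huv : u ≠ v) (hmu : m ≠ u) (hmv : m ≠ v) :
    Commute (sswOp u v) (D m) := by
  rw [sswOp_eq huv]
  exact ((commute_swOp_dunklC hq0 hqs hqσ hmu hmv).mul_left
    (commute_negOp_dunklC hq0 hqs hqσ hmu)).mul_left (commute_negOp_dunklC hq0 hqs hqσ hmv)

theorem sswOp_mul_dunklC_left {u v : Fin r} (huv : u ≠ v) :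
    sswOp u v * D u = -(D v * sswOp u v) := by
  rw [sswOp_eq huv, mul_assoc, (commute_negOp_dunklC hq0 hqs hqσ huv).eq, ← mul_assoc,
    mul_assoc (swOp u v), negOp_mul_dunklC_self hq0 hqs hqσ]
  -- `mul_neg` and `neg_mul` only rewrite in `Module.End` when the type is given explicitly
  simp only [mul_neg (α := Module.End ℂ (Pol r)), neg_mul (α := Module.End ℂ (Pol r)),
    ← mul_assoc, swOp_mul_dunklC_left hq0 hqs hqσ]

theorem sswOp_mul_dunklC_right {u v : Fin r} (huv : u ≠ v) :
    sswOp u v * D v = -(D u * sswOp u v) := by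
  rw [sswOp_comm, sswOp_mul_dunklC_left hq0 hqs hqσ huv.symm]

theorem sswOp_sub_swOp_mul_dunklC {j k : Fin r} (hjk : j ≠ k) :
    (sswOp j k - swOp j k) * D j = -(D k * (sswOp j k + swOp j k)) := by
  rw [sub_mul, sswOp_mul_dunklC_left hq0 hqs hqσ hjk, swOp_mul_dunklC_left hq0 hqs hqσ, mul_add]
  abel

theorem sswOp_add_swOp_mul_dunklC {j k : Fin r} (hjk : j ≠ k) :
    (sswOp j k + swOp j k) * D k = -(D j * (sswOp j k - swOp j k)) := by
  rw [add_mul, sswOp_mul_dunklC_right hq0 hqs hqσ hjk, swOp_mul_dunklC_right hq0 hqs hqσ, mul_sub]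
  abel

theorem lie_dunklC_mulOp_X_of_ne {k j : Fin r} (hkj : k ≠ j) :
    ⁅D k, mulOp (X j)⁆ = (a / 2) • (sswOp j k - swOp j k) := LinearMap.ext fun f => by
  have hq := (hq0.isDiffQuot k).apply_mul (X_ne_zero k) (c := 0) (x := X j)
    (by simp [hkj.symm]) f
  simp only [Ring.lie_def, LinearMap.sub_apply, Module.End.mul_apply, mulOp_apply,
    LinearMap.smul_apply, sswOp_apply, swOp_apply]
  rw [dunklC_apply, dunklC_apply, pderiv_mul, pderiv_X_of_ne hkj.symm, hq,
    sum_congr rfl fun i hi => qs_add_qσ_X_mul_of_ne hqs hqσ (ne_of_mem_erase hi) hkj f,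
    sum_add_distrib, sum_ite_eq', if_pos (mem_erase.mpr ⟨hkj.symm, mem_univ j⟩), ← mul_sum]
  simp only [zero_mul, add_zero, mul_add, mul_smul_comm]
  module

theorem lie_dunklC_mulOp_X_self (j : Fin r) :
    ⁅D j, mulOp (X j)⁆
      = 1 + (ι - 1) • negOp j + (a / 2) • ∑ i ∈ univ.erase j, (sswOp i j + swOp i j) :=
  LinearMap.ext fun f => by
  have hq := (hq0.isDiffQuot j).apply_mul (X_ne_zero j) (c := 2) (x := X j) (by simp; ring) f
  simp only [Ring.lie_def, LinearMap.sub_apply, LinearMap.add_apply, Module.End.mul_apply,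
    mulOp_apply, LinearMap.smul_apply, LinearMap.sum_apply, Module.End.one_apply, negOp_apply,
    sswOp_apply, swOp_apply]
  rw [dunklC_apply, dunklC_apply, pderiv_mul, pderiv_X_self, hq,
    sum_congr rfl fun i hi => qs_add_qσ_X_mul_self hqs hqσ (ne_of_mem_erase hi) f,
    sum_add_distrib, ← mul_sum]
  simp only [one_mul, two_mul, mul_add, mul_smul_comm, smul_add]
  module

theorem dunklC_one (m : Fin r) : D m 1 = 0 := by
  have hq : ∀ i ∈ univ.erase m, qs i m 1 + qσ i m 1 = 0 := fun i hi => by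
    rw [(hqs.isDiffQuot (ne_of_mem_erase hi)).apply_one (X_sub_X_ne_zero (ne_of_mem_erase hi)),
      (hqσ.isDiffQuot (ne_of_mem_erase hi)).apply_one (X_add_X_ne_zero (ne_of_mem_erase hi)),
      add_zero]
  rw [dunklC_apply, sum_eq_zero hq, (hq0.isDiffQuot m).apply_one (X_ne_zero m)]
  simp

theorem lie_dunklC_lie_dunklC_mulOp_X_self {j k : Fin r} (hjk : j ≠ k) :
    ⁅D j, ⁅D k, mulOp (X j)⁆⁆ = ⁅D k, ⁅D j, mulOp (X j)⁆⁆ := by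
  set C := 1 + (ι - 1) • negOp j + (a / 2) • ∑ i ∈ (univ.erase j).erase k, (sswOp i j + swOp i j)
    with hC_def
  have hC : Commute (D k) C := by
    refine ((Commute.one_right _).add_right ((commute_negOp_dunklC hq0 hqs hqσ hjk.symm).symm
      |>.smul_right _)).add_right ((Commute.sum_right _ _ _ fun i hi => ?_).smul_right _)
    obtain ⟨hik, hij⟩ : i ≠ k ∧ i ≠ j :=
      ⟨ne_of_mem_erase hi, ne_of_mem_erase (mem_of_mem_erase hi)⟩
    exact (commute_sswOp_dunklC hq0 hqs hqσ hij hik.symm hjk.symm).symm.add_right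
      (commute_swOp_dunklC hq0 hqs hqσ hik.symm hjk.symm).symm
  have hsplit : ⁅D j, mulOp (X j)⁆ = C + (a / 2) • (sswOp j k + swOp j k) := by
    rw [hC_def, lie_dunklC_mulOp_X_self hq0 hqs hqσ,
      ← add_sum_erase _ _ (mem_erase.mpr ⟨hjk.symm, mem_univ k⟩), sswOp_comm, swOp_comm, smul_add]
    abel
  rw [hsplit, lie_dunklC_mulOp_X_of_ne hq0 hqs hqσ hjk.symm, Ring.lie_def, Ring.lie_def, mul_add,
    add_mul, hC.eq, mul_smul_comm, smul_mul_assoc, mul_smul_comm, smul_mul_assoc,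
    sswOp_sub_swOp_mul_dunklC hq0 hqs hqσ hjk, sswOp_add_swOp_mul_dunklC hq0 hqs hqσ hjk]
  module

theorem lie_dunklC_lie_dunklC_mulOp_X {j k : Fin r} (hjk : j ≠ k) (i : Fin r) :
    ⁅D j, ⁅D k, mulOp (X i)⁆⁆ = ⁅D k, ⁅D j, mulOp (X i)⁆⁆ := by
  rcases eq_or_ne i j with rfl | hij
  · exact lie_dunklC_lie_dunklC_mulOp_X_self hq0 hqs hqσ hjk
  rcases eq_or_ne i k with rfl | hik
  · exact (lie_dunklC_lie_dunklC_mulOp_X_self hq0 hqs hqσ hjk.symm).symm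
  have hcomm {m n : Fin r} (hmi : m ≠ i) (hmn : m ≠ n) (hin : i ≠ n) :
      Commute (D m) ((a / 2) • (sswOp i n - swOp i n)) :=
    ((commute_sswOp_dunklC hq0 hqs hqσ hin hmi hmn).symm.sub_right
      (commute_swOp_dunklC hq0 hqs hqσ hmi hmn).symm).smul_right _
  rw [lie_dunklC_mulOp_X_of_ne hq0 hqs hqσ hik.symm,
    lie_dunklC_mulOp_X_of_ne hq0 hqs hqσ hij.symm, commute_iff_lie_eq.mp (hcomm hij.symm hjk hik),
    commute_iff_lie_eq.mp (hcomm hik.symm hjk.symm hij)]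

theorem dunklC_commute (m n : Fin r) : Commute (D m) (D n) := by
  rcases eq_or_ne m n with rfl | hmn
  · exact Commute.refl _
  have hX : ∀ i g, ⁅D m, D n⁆ (X i * g) = X i * ⁅D m, D n⁆ g := fun i g => by
    have hjacobi : ⁅⁅D m, D n⁆, mulOp (X i)⁆
        = ⁅D m, ⁅D n, mulOp (X i)⁆⁆ - ⁅D n, ⁅D m, mulOp (X i)⁆⁆ := by
      simp only [Ring.lie_def, mul_sub, sub_mul, mul_assoc]
      abel
    rw [lie_dunklC_lie_dunklC_mulOp_X hq0 hqs hqσ hmn, sub_self, ← commute_iff_lie_eq] at hjacobi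
    exact LinearMap.congr_fun hjacobi.eq g
  refine commute_iff_lie_eq.mpr (LinearMap.ext fun f => ?_)
  rw [linearMap_apply_eq_mul_apply_one _ hX f]
  simp [Ring.lie_def, dunklC_one hq0 hqs hqσ]

theorem prod_map_dunklC_eq_of_perm {ℓ₁ ℓ₂ : List (Fin r)} (h : ℓ₁.Perm ℓ₂) :
    (ℓ₁.map D).prod = (ℓ₂.map D).prod :=
  (h.map D).prod_eq' <| List.pairwise_map.mpr <|
    List.pairwise_of_forall fun m n => dunklC_commute hq0 hqs hqσ m n

theorem prod_map_dunklC_cons_mul_mulOp_X (j : Fin r) (ℓ : List (Fin r)) (hℓ : (j :: ℓ).Nodup) :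
    ((j :: ℓ).map D).prod * mulOp (X j)
      = mulOp (X j) * ((j :: ℓ).map D).prod + (ℓ.map D).prod
        + (ι - 1) • (negOp j * (ℓ.map D).prod)
        + (a / 2) • ∑ i ∈ univ \ (j :: ℓ).toFinset, (sswOp i j + swOp i j) * (ℓ.map D).prod := by
  induction ℓ with
  | nil =>
    simp only [List.map_cons, List.map_nil, List.prod_cons, List.prod_nil, mul_one,
      List.toFinset_cons, List.toFinset_nil, insert_empty, sdiff_singleton_eq_erase]
    rw [mul_eq_mul_add_lie, lie_dunklC_mulOp_X_self hq0 hqs hqσ]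
    abel
  | cons k t ih =>
    obtain ⟨hjk, hkt, hjt⟩ : j ≠ k ∧ k ∉ t ∧ (j :: t).Nodup := by
      simp only [List.nodup_cons, List.mem_cons, not_or] at hℓ ⊢
      tauto
    simp only [List.map_cons, List.prod_cons] at ih ⊢
    set P := (t.map D).prod
    have hk : k ∈ univ \ (j :: t).toFinset := by simp [hjk.symm, hkt]
    have hS : univ \ (j :: k :: t).toFinset = (univ \ (j :: t).toFinset).erase k := by
      ext i
      simp only [mem_sdiff, mem_univ, true_and, List.mem_toFinset, List.mem_cons, mem_erase]
      tauto
    have hsum : ∑ i ∈ univ \ (j :: k :: t).toFinset, D k * ((sswOp i j + swOp i j) * P)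
        = ∑ i ∈ univ \ (j :: k :: t).toFinset, (sswOp i j + swOp i j) * (D k * P) := by
      refine sum_congr rfl fun i hi => ?_
      obtain ⟨hij, hik⟩ : i ≠ j ∧ i ≠ k := by simp_all
      rw [← mul_assoc, ← mul_assoc, ((commute_sswOp_dunklC hq0 hqs hqσ hij hik.symm hjk.symm
        ).add_left (commute_swOp_dunklC hq0 hqs hqσ hik.symm hjk.symm)).eq]
    -- moving `D k` past `x j` produces exactly the negative of the `i = k` term of the sum
    have hcancel :
        (sswOp j k - swOp j k) * (D j * P) + D k * ((sswOp k j + swOp k j) * P) = 0 := by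
      rw [sswOp_comm k j, swOp_comm k j, ← mul_assoc, ← mul_assoc,
        sswOp_sub_swOp_mul_dunklC hq0 hqs hqσ hjk, neg_mul (α := Module.End ℂ (Pol r)),
        neg_add_cancel]
    rw [← mul_assoc, (dunklC_commute hq0 hqs hqσ j k).eq, mul_assoc, mul_assoc,
      ← mul_assoc (D j), ih hjt, mul_add, mul_add, mul_add, mul_smul_comm, mul_smul_comm, mul_sum,
      ← add_sum_erase _ _ hk, ← hS, hsum, ← mul_assoc (D k) (mulOp _), mul_eq_mul_add_lie (D k),
      lie_dunklC_mulOp_X_of_ne hq0 hqs hqσ hjk.symm, ← mul_assoc (D k) (negOp j),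
      ← (commute_negOp_dunklC hq0 hqs hqσ hjk.symm).eq]
    simp only [mul_assoc, mul_add, add_mul, sub_mul, smul_mul_assoc] at hcancel ⊢
    rw [← mul_assoc (D k), (dunklC_commute hq0 hqs hqσ k j).eq, mul_assoc]
    linear_combination (norm := module) (a / 2) • hcancel

theorem opProd_dunklC_eq (j : Fin r) :
    opProd D = D j * (((List.finRange r).erase j).map D).prod := by
  rw [opProd, prod_map_dunklC_eq_of_perm hq0 hqs hqσ
    (List.perm_cons_erase (List.mem_finRange j)), List.map_cons, List.prod_cons]

theorem opProd_dunklC_mul_mulOp_X (j : Fin r) :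
    opProd D * mulOp (X j) = mulOp (X j) * opProd D + (((List.finRange r).erase j).map D).prod
      + (ι - 1) • (negOp j * (((List.finRange r).erase j).map D).prod) := by
  have hperm := List.perm_cons_erase (List.mem_finRange j)
  have h := prod_map_dunklC_cons_mul_mulOp_X (ι := ι) (a := a) hq0 hqs hqσ j _
    (hperm.nodup_iff.mp (List.nodup_finRange r))
  rwa [← List.toFinset_eq_of_perm _ _ hperm, List.toFinset_finRange, sdiff_self, bot_eq_empty,
    sum_empty, smul_zero, add_zero, List.map_cons, List.prod_cons,
    ← opProd_dunklC_eq hq0 hqs hqσ] at h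

theorem commute_opProd_dunklC (j : Fin r) : Commute (opProd D) (D j) :=
  Commute.list_prod_left _ _ fun x hx => by
    obtain ⟨m, -, rfl⟩ := List.mem_map.mp hx
    exact dunklC_commute hq0 hqs hqσ m j

theorem negOp_mul_opProd_dunklC (j : Fin r) : negOp j * opProd D = -(opProd D * negOp j) := by
  have hcomm : Commute (negOp j) (((List.finRange r).erase j).map D).prod :=
    Commute.list_prod_right _ _ fun x hx => by
      obtain ⟨m, hm, rfl⟩ := List.mem_map.mp hx
      exact commute_negOp_dunklC hq0 hqs hqσ ((List.nodup_finRange r).mem_erase_iff.mp hm).1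
  rw [opProd_dunklC_eq hq0 hqs hqσ j, ← mul_assoc, negOp_mul_dunklC_self hq0 hqs hqσ,
    neg_mul (α := Module.End ℂ (Pol r)), mul_assoc, hcomm.eq, ← mul_assoc]

theorem commute_swOp_opProd_dunklC (u v : Fin r) : Commute (swOp u v) (opProd D) := by
  have h := SemiconjBy.list_prod_map (f := D) (g := D ∘ Equiv.swap u v)
    (fun m => swOp_mul_dunklC hq0 hqs hqσ u v m) (List.finRange r)
  rwa [← List.map_map, prod_map_dunklC_eq_of_perm hq0 hqs hqσ
    (Equiv.Perm.map_finRange_perm (Equiv.swap u v))] at h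

theorem commute_sswOp_opProd_dunklC {u v : Fin r} (huv : u ≠ v) :
    Commute (sswOp u v) (opProd D) := by
  have hs : swOp u v * opProd D = opProd D * swOp u v :=
    commute_swOp_opProd_dunklC hq0 hqs hqσ u v
  show sswOp u v * opProd D = opProd D * sswOp u v
  rw [sswOp_eq huv, mul_assoc, mul_assoc, negOp_mul_opProd_dunklC hq0 hqs hqσ v]
  simp only [mul_neg (α := Module.End ℂ (Pol r)), ← mul_assoc (negOp u),
    negOp_mul_opProd_dunklC hq0 hqs hqσ u, neg_mul (α := Module.End ℂ (Pol r)), neg_neg]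
  rw [← mul_assoc, ← mul_assoc, hs]
  simp only [mul_assoc]

end Dunkl

/-- The shift formula for type-C Dunkl operators:
`(∏ₖ Dₖ)(Dⱼxⱼ - (a/2)∑_{i<j}(σ_{ij}+s_{ij})) =
 (Dⱼxⱼ - (a/2)∑_{i<j}(σ_{ij}+s_{ij}) + 1 - (ι-1)σ_j)(∏ₖ Dₖ)`. -/
theorem dunklC_shift_formula {r : ℕ} (ι a : ℂ) (q0 : Fin r → Module.End ℂ (Pol r))
    (qs qσ : Fin r → Fin r → Module.End ℂ (Pol r))
    (hq0 : QuotLong q0) (hqs : QuotS qs) (hqσ : QuotSig qσ) (j : Fin r) :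
    letI U : Module.End ℂ (Pol r) := dunklC ι a q0 qs qσ j * mulOp (X j) -
      (a / 2) • ∑ i ∈ Finset.univ.filter (fun i => i < j), (sswOp i j + swOp i j)
    opProd (dunklC ι a q0 qs qσ) * U
      = (U + 1 - (ι - 1) • negOp j) * opProd (dunklC ι a q0 qs qσ) := by
  set D := dunklC ι a q0 qs qσ
  set P := opProd D
  set S := ∑ i ∈ univ.filter (· < j), (sswOp i j + swOp i j)
  have hPS : Commute P S := Commute.sum_right _ _ _ fun i hi =>
    (commute_sswOp_opProd_dunklC hq0 hqs hqσ (mem_filter.mp hi).2.ne).symm.add_right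
      (commute_swOp_opProd_dunklC hq0 hqs hqσ i j).symm
  have hDσ : D j * negOp j = -(negOp j * D j) := by
    rw [negOp_mul_dunklC_self hq0 hqs hqσ, neg_neg]
  calc P * (D j * mulOp (X j) - (a / 2) • S)
      = D j * (P * mulOp (X j)) - (a / 2) • (S * P) := by
        rw [mul_sub, ← mul_assoc, (commute_opProd_dunklC hq0 hqs hqσ j).eq, mul_assoc,
          mul_smul_comm, hPS.eq]
    _ = D j * mulOp (X j) * P + P - (ι - 1) • (negOp j * P) - (a / 2) • (S * P) := by
        rw [opProd_dunklC_mul_mulOp_X hq0 hqs hqσ, mul_add, mul_add, mul_smul_comm,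
          ← mul_assoc (D j) (negOp j), hDσ, neg_mul (α := Module.End ℂ (Pol r)), mul_assoc,
          ← opProd_dunklC_eq hq0 hqs hqσ, mul_assoc]
        module
    _ = (D j * mulOp (X j) - (a / 2) • S + 1 - (ι - 1) • negOp j) * P := by
        simp only [sub_mul, add_mul, one_mul, smul_mul_assoc]
        abel
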